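/- arXiv:1210.0007 — 2 statements merged into one kernel-verified Lean document; each statement's English description precedes it below -/
import Mathlib

section
/- Let Ω := { ω ∈ C([0,T], ℝ^d) : ω_0 = 0 } with the sup norm ‖ω‖_T := sup_{0≤s≤T} |ω_s|, let B be the canonical process B_t(ω) = ω_t, and let 𝔽 = (F_t)_{0≤t≤T} be its raw natural filtration, F_t := σ(B_s : s ≤ t). Let H : Ω → [0,T] be an 𝔽-stopping time, let F_H := { A ⊆ Ω : A ∩ {H ≤ t} ∈ F_t for all t ∈ [0,T] }, let δ > 0, let 0 = t_0 < t_1 < ⋯ < t_N = T be a grid with t_{k+1} − t_k ≤ δ for all k, and set t_{N+1} := T + δ. Then for every E ∈ F_H there exist a countable partition (Ẽ_k)_{k≥1} ⊆ F_H of E, indices p_k ∈ {0,…,N}, and paths ω^k ∈ Ẽ_k (for each k with Ẽ_k nonempty) such that for every k: (i) H(ω) ∈ [t_{p_k}, t_{p_k+1}) for all ω ∈ Ẽ_k; (ii) sup_{ω,ω' ∈ Ẽ_k} ‖ω_{·∧H(ω)} − ω'_{·∧H(ω')}‖_T ≤ δ; (iii) H(ω^k) = min_{ω ∈ Ẽ_k}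 H(ω), i.e. the minimum of H over Ẽ_k is attained at ω^k. -/
/-!
Cut `E` into the cells where `H` lies in a fixed grid interval and the stopped path
`ω_{·∧H(ω)}` lies within `δ/2` of a fixed point of a countable dense subset of
`C([0,T], ℝ^d)`. On `{H ≤ t}` the ball condition involves only countably many evaluations
`ω ↦ ω_{s∧H(ω)∧t}`, which are `F_t`-measurable as a jointly measurable function of
`(H(ω) ∧ t, ω)`, continuous in the time variable; hence the cells lie in `F_H`. Finally each
cell is sliced along `H` at a sequence of values of `H` that is coinitial in its range, so
that `H` attains its minimum on every slice.
-/

open MeasureTheory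

/-- The canonical path space: continuous paths `[0,T] → ℝ^d` starting at the origin. -/
def PathSpace (d : ℕ) (T : ℝ) (hT : 0 ≤ T) :=
  {ω : C(Set.Icc (0 : ℝ) T, EuclideanSpace ℝ (Fin d)) // ω ⟨0, le_refl 0, hT⟩ = 0}

/-- The path `ω` stopped at time `r`, i.e. `s ↦ ω_{s ∧ r}`. -/
noncomputable def stoppedPath (d : ℕ) (T : ℝ) (hT : 0 ≤ T)
    (ω : C(Set.Icc (0 : ℝ) T, EuclideanSpace ℝ (Fin d))) (r : ℝ) :
    Set.Icc (0 : ℝ) T → EuclideanSpace ℝ (Fin d) :=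
  fun s => ω (Set.projIcc 0 T hT (min s.1 r))

/-- The raw natural filtration of the canonical process: `F_t := σ(B_s : s ≤ t)`. -/
noncomputable def pathSigma (d : ℕ) (T : ℝ) (hT : 0 ≤ T) (t : ℝ) :
    MeasurableSpace (PathSpace d T hT) :=
  ⨆ (s : Set.Icc (0 : ℝ) T) (_ : (s : ℝ) ≤ t),
    MeasurableSpace.comap (fun ω : PathSpace d T hT => ω.1 s) inferInstance

open Set Function

section StoppingSigma

variable {Ω : Type*} {m : ℝ → MeasurableSpace Ω} {T : ℝ} {H : Ω → ℝ}

/-- The σ-algebra `F_H` of a `[0, T]`-valued stopping time `H` of the filtration `m`. -/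
def stoppingSigma (m : ℝ → MeasurableSpace Ω) (T : ℝ) (H : Ω → ℝ)
    (hH : ∀ t ∈ Icc (0 : ℝ) T, MeasurableSet[m t] {ω | H ω ≤ t}) : MeasurableSpace Ω where
  MeasurableSet' A := ∀ t ∈ Icc (0 : ℝ) T, MeasurableSet[m t] (A ∩ {ω | H ω ≤ t})
  measurableSet_empty t _ := by simpa only [empty_inter] using @MeasurableSet.empty _ (m t)
  measurableSet_compl A hA t ht := by
    have : Aᶜ ∩ {ω | H ω ≤ t} = {ω | H ω ≤ t} \ (A ∩ {ω | H ω ≤ t}) := by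
      ext ω; simp only [mem_inter_iff, mem_compl_iff, mem_sdiff]; tauto
    exact this ▸ (hH t ht).diff (hA t ht)
  measurableSet_iUnion A hA t ht := by
    simpa only [iUnion_inter] using MeasurableSet.iUnion fun n => hA n t ht

variable (hH : ∀ t ∈ Icc (0 : ℝ) T, MeasurableSet[m t] {ω | H ω ≤ t})

theorem measurable_stoppingSigma (hm : Monotone m) (hH0 : ∀ ω, 0 ≤ H ω) :
    Measurable[stoppingSigma m T H hH] H := by
  refine measurable_of_Iic fun a t ht => ?_
  rcases lt_or_ge a 0 with ha | ha
  · convert @MeasurableSet.empty _ (m t)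
    exact eq_empty_of_forall_notMem fun ω hω => (ha.trans_le (hH0 ω)).not_ge hω.1
  · have : H ⁻¹' Iic a ∩ {ω | H ω ≤ t} = {ω | H ω ≤ min a t} := by
      ext ω; simp only [mem_inter_iff, mem_preimage, mem_Iic, mem_ofPred_eq, le_min_iff]
    rw [this]
    exact hm (min_le_right a t) _ (hH _ ⟨le_min ha ht.1, (min_le_right a t).trans ht.2⟩)

include hH in
theorem measurable_min_const_of_stopping (hm : Monotone m) (hH0 : ∀ ω, 0 ≤ H ω) {t : ℝ}
    (ht : t ∈ Icc (0 : ℝ) T) : Measurable[m t] fun ω => min (H ω) t := by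
  refine measurable_of_Iic fun a => ?_
  rcases le_or_gt t a with hta | hat
  · convert @MeasurableSet.univ _ (m t)
    exact eq_univ_of_forall fun ω => (min_le_right _ t).trans hta
  · have : (fun ω => min (H ω) t) ⁻¹' Iic a = H ⁻¹' Iic a ∩ {ω | H ω ≤ t} := by
      ext ω
      simp only [mem_preimage, mem_Iic, min_le_iff, hat.not_ge, or_false, mem_inter_iff,
        mem_ofPred_eq, iff_self_and]
      exact fun h => h.trans hat.le
    rw [this]
    exact measurable_stoppingSigma hH hm hH0 measurableSet_Iic t ht

end StoppingSigma

theorem measurableSet_forall_dist_le {Ω X Y : Type*} {mΩ : MeasurableSpace Ω} [TopologicalSpace X]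
    [TopologicalSpace.SeparableSpace X] [PseudoMetricSpace Y] [MeasurableSpace Y]
    [OpensMeasurableSpace Y] {f : Ω → X → Y} (hfc : ∀ ω, Continuous (f ω))
    (hfm : ∀ s, Measurable fun ω => f ω s) {g : X → Y} (hg : Continuous g) (r : ℝ) :
    MeasurableSet {ω | ∀ s, dist (f ω s) (g s) ≤ r} := by
  obtain ⟨D, hDc, hDd⟩ := TopologicalSpace.exists_countable_dense X
  have : {ω | ∀ s, dist (f ω s) (g s) ≤ r} = ⋂ s ∈ D, (f · s) ⁻¹' Metric.closedBall (g s) r := by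
    ext ω
    simp only [mem_ofPred_eq, mem_iInter, mem_preimage, Metric.mem_closedBall]
    exact ⟨fun h s _ => h s,
      fun h => hDd.induction h (isClosed_le ((hfc ω).dist hg) continuous_const)⟩
  exact this ▸ .biInter hDc fun s _ => hfm s Metric.isClosed_closedBall.measurableSet

section PathSpace

variable {d : ℕ} {T : ℝ} {hT : 0 ≤ T}

theorem pathSigma_mono : Monotone (pathSigma d T hT) :=
  fun _ _ hst => iSup₂_le fun u hu => le_iSup₂_of_le
    (f := fun (u : Icc (0 : ℝ) T) (_ : (u : ℝ) ≤ _) =>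
      MeasurableSpace.comap (fun ω : PathSpace d T hT => ω.1 u) inferInstance)
    u (hu.trans hst) le_rfl

theorem measurable_eval_pathSigma {t : ℝ} {s : Icc (0 : ℝ) T} (hs : (s : ℝ) ≤ t) :
    Measurable[pathSigma d T hT t] fun ω : PathSpace d T hT => ω.1 s :=
  measurable_iff_comap_le.2 <| le_iSup₂ (f := fun (u : Icc (0 : ℝ) T) (_ : (u : ℝ) ≤ t) =>
    MeasurableSpace.comap (fun ω : PathSpace d T hT => ω.1 u) inferInstance) s hs

theorem continuous_stoppedPath (ω : C(Icc (0 : ℝ) T, EuclideanSpace ℝ (Fin d))) (r : ℝ) :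
    Continuous (stoppedPath d T hT ω r) :=
  ω.continuous.comp (continuous_projIcc.comp (continuous_subtype_val.min continuous_const))

theorem continuous_stoppedPath_time (ω : C(Icc (0 : ℝ) T, EuclideanSpace ℝ (Fin d)))
    (s : Icc (0 : ℝ) T) : Continuous fun r => stoppedPath d T hT ω r s :=
  ω.continuous.comp (continuous_projIcc.comp (continuous_const.min continuous_id))

theorem measurable_stoppedPath_of_le {r t : ℝ} (hrt : r ≤ t) (ht : 0 ≤ t) (s : Icc (0 : ℝ) T) :
    Measurable[pathSigma d T hT t] fun ω : PathSpace d T hT => stoppedPath d T hT ω.1 r s :=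
  measurable_eval_pathSigma <| max_le ht <| (min_le_right _ _).trans <| (min_le_right _ _).trans hrt

variable {H : PathSpace d T hT → ℝ} (hH0 : ∀ ω, 0 ≤ H ω)
  (hHstop : ∀ t ∈ Icc (0 : ℝ) T, MeasurableSet[pathSigma d T hT t] {ω | H ω ≤ t})
include hH0

include hHstop in
theorem measurable_stoppedPath_min {t : ℝ} (ht : t ∈ Icc (0 : ℝ) T) (s : Icc (0 : ℝ) T) :
    Measurable[pathSigma d T hT t] fun ω => stoppedPath d T hT ω.1 (min (H ω) t) s := by
  let _ := pathSigma d T hT t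
  have hu : Measurable
      (uncurry fun r (ω : PathSpace d T hT) => stoppedPath d T hT ω.1 (min r t) s) :=
    measurable_uncurry_of_continuous_of_measurable
      (fun ω => (continuous_stoppedPath_time ω.1 s).comp (continuous_id.min continuous_const))
      fun r => measurable_stoppedPath_of_le (min_le_right r t) ht.1 s
  simpa only [comp_def, uncurry_apply_pair, id_eq, min_assoc, min_self] using
    hu.comp ((measurable_min_const_of_stopping hHstop pathSigma_mono hH0 ht).prodMk measurable_id)

theorem measurableSet_forall_dist_stoppedPath_le
    (x : C(Icc (0 : ℝ) T, EuclideanSpace ℝ (Fin d))) (r : ℝ) :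
    MeasurableSet[stoppingSigma (pathSigma d T hT) T H hHstop]
      {ω | ∀ s, dist (stoppedPath d T hT ω.1 (H ω) s) (x s) ≤ r} := by
  intro t ht
  have : {ω | ∀ s, dist (stoppedPath d T hT ω.1 (H ω) s) (x s) ≤ r} ∩ {ω | H ω ≤ t} =
      {ω | ∀ s, dist (stoppedPath d T hT ω.1 (min (H ω) t) s) (x s) ≤ r} ∩ {ω | H ω ≤ t} := by
    ext ω
    simp only [mem_inter_iff, mem_ofPred_eq]
    exact and_congr_left fun hHt => by rw [min_eq_left hHt]
  have hmin : MeasurableSet[pathSigma d T hT t]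
      {ω | ∀ s, dist (stoppedPath d T hT ω.1 (min (H ω) t) s) (x s) ≤ r} := by
    apply measurableSet_forall_dist_le
    · exact fun ω => continuous_stoppedPath ω.1 _
    · exact measurable_stoppedPath_min hH0 hHstop ht
    · exact x.continuous
  rw [this]
  exact hmin.inter (hHstop t ht)

theorem exists_partition_stoppedPath_dist_le {r : ℝ} (hr : 0 < r) :
    ∃ A : ℕ → Set (PathSpace d T hT), Pairwise (Disjoint on A) ∧ ⋃ i, A i = univ ∧
      (∀ i, MeasurableSet[stoppingSigma (pathSigma d T hT) T H hHstop] (A i)) ∧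
      ∀ i, ∀ ω ∈ A i, ∀ ω' ∈ A i, ∀ s,
        dist (stoppedPath d T hT ω.1 (H ω) s) (stoppedPath d T hT ω'.1 (H ω') s) ≤ r := by
  set x := TopologicalSpace.denseSeq C(Icc (0 : ℝ) T, EuclideanSpace ℝ (Fin d))
  set B : ℕ → Set (PathSpace d T hT) :=
    fun i => {ω | ∀ s, dist (stoppedPath d T hT ω.1 (H ω) s) (x i s) ≤ r / 2}
  refine ⟨disjointed B, disjoint_disjointed B, ?_, .disjointed fun i =>
    measurableSet_forall_dist_stoppedPath_le hH0 hHstop (x i) _, ?_⟩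
  · refine iUnion_disjointed.trans (eq_univ_of_forall fun ω => ?_)
    obtain ⟨i, hi⟩ := (TopologicalSpace.denseRange_denseSeq _).exists_dist_lt
      (⟨_, continuous_stoppedPath ω.1 (H ω)⟩ : C(Icc (0 : ℝ) T, EuclideanSpace ℝ (Fin d)))
      (half_pos hr)
    exact mem_iUnion.2 ⟨i, fun s => (ContinuousMap.dist_apply_le_dist s).trans hi.le⟩
  · intro i ω hω ω' hω' s
    calc _ ≤ dist (stoppedPath d T hT ω.1 (H ω) s) (x i s) +
          dist (stoppedPath d T hT ω'.1 (H ω') s) (x i s) := dist_triangle_right _ _ _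
      _ ≤ r / 2 + r / 2 := add_le_add (disjointed_subset B i hω s) (disjointed_subset B i hω' s)
      _ = r := add_halves r

end PathSpace

theorem exists_seq_mem_forall_exists_le {V : Set ℝ} (hne : V.Nonempty) (hV : BddBelow V) :
    ∃ u : ℕ → ℝ, (∀ n, u n ∈ V) ∧ ∀ y ∈ V, ∃ n, u n ≤ y := by
  by_cases hmin : sInf V ∈ V
  · exact ⟨fun _ => sInf V, fun _ => hmin, fun y hy => ⟨0, csInf_le hV hy⟩⟩
  obtain ⟨u, -, hu, huV⟩ := exists_seq_tendsto_sInf hne hV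
  refine ⟨u, huV, fun y hy => ?_⟩
  have hlt : sInf V < y := (csInf_le hV hy).lt_of_ne fun h => hmin (h ▸ hy)
  exact ((hu.eventually (gt_mem_nhds hlt)).exists).imp fun _ => le_of_lt

theorem mem_disjointed_Ici {u : ℕ → ℝ} {n : ℕ} {y : ℝ} :
    y ∈ disjointed (fun k => Ici (u k)) n ↔ u n ≤ y ∧ ∀ j < n, y < u j := by
  simp [disjointed_eq_inter_compl]

/-- Slicing `ℝ` at values `u n` of `H` that are coinitial in `H '' C` makes the minimum of `H`
attained on every nonempty slice of `C`, namely at the point where `H = u n`. -/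
theorem exists_partition_isMinOn {α : Type*} (H : α → ℝ) (C : Set α) (hC : BddBelow (H '' C)) :
    ∃ S : ℕ → Set ℝ, (∀ n, MeasurableSet (S n)) ∧ Pairwise (Disjoint on S) ∧
      C ⊆ H ⁻¹' ⋃ n, S n ∧
      ∀ n, (C ∩ H ⁻¹' S n).Nonempty → ∃ ω₀ ∈ C ∩ H ⁻¹' S n, IsMinOn H (C ∩ H ⁻¹' S n) ω₀ := by
  rcases C.eq_empty_or_nonempty with rfl | hne
  · exact ⟨fun _ => ∅, fun _ => .empty, fun _ _ _ => disjoint_bot_left, empty_subset _,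
      fun _ h => by simp at h⟩
  obtain ⟨u, huV, hcover⟩ := exists_seq_mem_forall_exists_le (hne.image H) hC
  refine ⟨disjointed fun k => Ici (u k), .disjointed fun _ => measurableSet_Ici,
    disjoint_disjointed _, fun ω hω => ?_, ?_⟩
  · obtain ⟨n, hn⟩ := hcover _ (mem_image_of_mem H hω)
    rw [mem_preimage, iUnion_disjointed]
    exact mem_iUnion.2 ⟨n, hn⟩
  · rintro n ⟨ω, -, hω⟩
    obtain ⟨ω₀, hω₀C, hω₀⟩ := huV n
    rw [mem_preimage, mem_disjointed_Ici] at hω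
    refine ⟨ω₀, ⟨hω₀C, ?_⟩, fun ω' hω' => ?_⟩
    · rw [mem_preimage, mem_disjointed_Ici, hω₀]
      exact ⟨le_rfl, fun j hj => hω.1.trans_lt (hω.2 j hj)⟩
    · rw [hω₀]
      exact (mem_disjointed_Ici.1 hω'.2).1

theorem pairwise_disjoint_Ico_fin_succ {α : Type*} [Preorder α] {f : ℕ → α} {n : ℕ}
    (hf : ∀ k < n, f k < f (k + 1)) :
    Pairwise (Disjoint on fun p : Fin (n + 1) => Ico (f p) (f (p + 1))) := by
  refine (pairwise_disjoint_on _).2 fun p q hpq =>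
    (Ico_disjoint_Ico_same (c := f (q + 1))).mono_right (Ico_subset_Ico_left ?_)
  have hq : (q : ℕ) ≤ n := Nat.lt_succ_iff.1 q.2
  exact (strictMonoOn_Iic_of_lt_succ hf).monotoneOn (mem_Iic.2 ((Fin.lt_def.1 hpq).trans_le hq))
    (mem_Iic.2 hq) (Fin.lt_def.1 hpq)

theorem exists_fin_mem_Ico {α : Type*} [LinearOrder α] {f : ℕ → α} {n : ℕ} {x : α}
    (hx : x ∈ Ico (f 0) (f (n + 1))) : ∃ p : Fin (n + 1), x ∈ Ico (f p) (f (p + 1)) := by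
  obtain ⟨p, hp, hxp⟩ := mem_iUnion₂.1 (Ico_subset_biUnion_Ico (n + 1) f hx)
  exact ⟨⟨p, Finset.mem_range.1 hp⟩, hxp⟩

theorem pairwise_disjoint_on_prod_inter {ι κ α : Type*} {s : ι → Set α} {t : ι → κ → Set α}
    (hs : Pairwise (Disjoint on s)) (ht : ∀ i, Pairwise (Disjoint on t i)) :
    Pairwise (Disjoint on fun q : ι × κ => s q.1 ∩ t q.1 q.2) := by
  rintro ⟨i, k⟩ ⟨i', k'⟩ hne
  by_cases hi : i = i'
  · subst hi
    exact (ht i fun hk => hne (congrArg (Prod.mk i) hk)).mono inter_subset_right inter_subset_right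
  · exact (hs hi).mono inter_subset_left inter_subset_left

theorem stmt_3_general (d : ℕ) (T : ℝ) (hT : 0 < T)
    (H : PathSpace d T hT.le → ℝ)
    (hHrange : ∀ ω, H ω ∈ Set.Icc (0 : ℝ) T)
    (hHstop : ∀ t ∈ Set.Icc (0 : ℝ) T,
      MeasurableSet[pathSigma d T hT.le t] {ω | H ω ≤ t})
    (δ : ℝ) (hδ : 0 < δ) (N : ℕ) (tg : ℕ → ℝ)
    (htg0 : tg 0 = 0)
    (htgmono : ∀ k < N, tg k < tg (k + 1))
    (htgN1 : tg (N + 1) = T + δ)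
    (E : Set (PathSpace d T hT.le))
    (hE : ∀ t ∈ Set.Icc (0 : ℝ) T,
      MeasurableSet[pathSigma d T hT.le t] (E ∩ {ω | H ω ≤ t})) :
    ∃ (Etil : ℕ → Set (PathSpace d T hT.le)) (p : ℕ → ℕ),
      Pairwise (Function.onFun Disjoint Etil) ∧
      (⋃ k, Etil k) = E ∧
      (∀ k, ∀ t ∈ Set.Icc (0 : ℝ) T,
        MeasurableSet[pathSigma d T hT.le t] (Etil k ∩ {ω | H ω ≤ t})) ∧
      (∀ k, p k ≤ N) ∧
      (∀ k, ∀ ω ∈ Etil k, tg (p k) ≤ H ω ∧ H ω < tg (p k + 1)) ∧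
      (∀ k, ∀ ω ∈ Etil k, ∀ ω' ∈ Etil k, ∀ s : Set.Icc (0 : ℝ) T,
        ‖stoppedPath d T hT.le ω.1 (H ω) s - stoppedPath d T hT.le ω'.1 (H ω') s‖ ≤ δ) ∧
      (∀ k, (Etil k).Nonempty → ∃ ωk ∈ Etil k, ∀ ω ∈ Etil k, H ωk ≤ H ω) := by
  have hH0 : ∀ ω, 0 ≤ H ω := fun ω => (hHrange ω).1
  have hHm := measurable_stoppingSigma hHstop pathSigma_mono hH0
  have hEm : MeasurableSet[stoppingSigma (pathSigma d T hT.le) T H hHstop] E := hE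
  obtain ⟨A, hAdisj, hAcover, hAm, hAdist⟩ := exists_partition_stoppedPath_dist_le hH0 hHstop hδ
  let G : Fin (N + 1) → Set ℝ := fun p => Ico (tg p) (tg (p + 1))
  let C : Fin (N + 1) × ℕ → Set (PathSpace d T hT.le) := fun q => (E ∩ H ⁻¹' G q.1) ∩ A q.2
  choose S hSm hSdisj hScover hSmin using fun q =>
    exists_partition_isMinOn H (C q) ⟨0, forall_mem_image.2 fun ω _ => hH0 ω⟩
  let P : (Fin (N + 1) × ℕ) × ℕ → Set (PathSpace d T hT.le) := fun r => C r.1 ∩ H ⁻¹' S r.1 r.2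
  obtain ⟨e⟩ : Nonempty (ℕ ≃ (Fin (N + 1) × ℕ) × ℕ) := nonempty_equiv_of_countable
  refine ⟨P ∘ e, fun k => (e k).1.1, ?_, ?_,
    fun k => ((hEm.inter (hHm measurableSet_Ico)).inter (hAm _)).inter (hHm (hSm _ _)),
    fun k => Nat.lt_succ_iff.1 (e k).1.1.2, fun k ω hω => hω.1.1.2,
    fun k ω hω ω' hω' s => by rw [← dist_eq_norm]; exact hAdist _ ω hω.1.2 ω' hω'.1.2 s,
    fun k => hSmin _ _⟩
  · have hGdisj : Pairwise (Disjoint on fun p => E ∩ H ⁻¹' G p) := fun p p' hp =>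
      ((pairwise_disjoint_Ico_fin_succ htgmono hp).preimage H).mono inter_subset_right
        inter_subset_right
    have hCdisj : Pairwise (Disjoint on C) := pairwise_disjoint_on_prod_inter hGdisj fun _ => hAdisj
    exact (pairwise_disjoint_on_prod_inter hCdisj fun q _ _ hn =>
      (hSdisj q hn).preimage H).comp_of_injective e.injective
  · refine (e.surjective.iUnion_comp P).trans <| (iUnion_subset fun r => inter_subset_left.trans
      (inter_subset_left.trans inter_subset_left)).antisymm fun ω hω => ?_
    have hHω : H ω ∈ Ico (tg 0) (tg (N + 1)) := by
      rw [htg0, htgN1]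
      exact ⟨hH0 ω, (hHrange ω).2.trans_lt (lt_add_of_pos_right T hδ)⟩
    obtain ⟨p, hωp⟩ := exists_fin_mem_Ico hHω
    obtain ⟨i, hi⟩ := mem_iUnion.1 (hAcover.symm ▸ mem_univ ω)
    have hωC : ω ∈ C (p, i) := ⟨⟨hω, hωp⟩, hi⟩
    obtain ⟨n, hn⟩ := mem_iUnion.1 (hScover _ hωC)
    exact mem_iUnion.2 ⟨(_, n), hωC, hn⟩

/-- if `H` is an `𝔽`-stopping time with values in `[0,T]`, `δ > 0`,
`0 = t_0 < t_1 < ⋯ < t_N = T` is a grid with mesh `≤ δ` and `t_{N+1} = T + δ`, then every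
`E ∈ F_H` admits a countable `F_H`-measurable partition `(Ẽ_k)` such that on each `Ẽ_k`,
`H` takes values in a single grid interval `[t_{p_k}, t_{p_k+1})`, the stopped paths are
`δ`-close to each other in sup norm, and the minimum of `H` over `Ẽ_k` is attained at
some `ω^k ∈ Ẽ_k` (when `Ẽ_k ≠ ∅`). -/
theorem stmt_3 (d : ℕ) (T : ℝ) (hT : 0 < T)
    (H : PathSpace d T hT.le → ℝ)
    (hHrange : ∀ ω, H ω ∈ Set.Icc (0 : ℝ) T)
    (hHstop : ∀ t ∈ Set.Icc (0 : ℝ) T,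
      MeasurableSet[pathSigma d T hT.le t] {ω | H ω ≤ t})
    (δ : ℝ) (hδ : 0 < δ) (N : ℕ) (hN : 0 < N) (tg : ℕ → ℝ)
    (htg0 : tg 0 = 0) (htgN : tg N = T)
    (htgmono : ∀ k < N, tg k < tg (k + 1))
    (htggap : ∀ k < N, tg (k + 1) - tg k ≤ δ)
    (htgN1 : tg (N + 1) = T + δ)
    (E : Set (PathSpace d T hT.le))
    (hE : ∀ t ∈ Set.Icc (0 : ℝ) T,
      MeasurableSet[pathSigma d T hT.le t] (E ∩ {ω | H ω ≤ t})) :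
    ∃ (Etil : ℕ → Set (PathSpace d T hT.le)) (p : ℕ → ℕ),
      Pairwise (Function.onFun Disjoint Etil) ∧
      (⋃ k, Etil k) = E ∧
      (∀ k, ∀ t ∈ Set.Icc (0 : ℝ) T,
        MeasurableSet[pathSigma d T hT.le t] (Etil k ∩ {ω | H ω ≤ t})) ∧
      (∀ k, p k ≤ N) ∧
      (∀ k, ∀ ω ∈ Etil k, tg (p k) ≤ H ω ∧ H ω < tg (p k + 1)) ∧
      (∀ k, ∀ ω ∈ Etil k, ∀ ω' ∈ Etil k, ∀ s : Set.Icc (0 : ℝ) T,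
        ‖stoppedPath d T hT.le ω.1 (H ω) s - stoppedPath d T hT.le ω'.1 (H ω') s‖ ≤ δ) ∧
      (∀ k, (Etil k).Nonempty → ∃ ωk ∈ Etil k, ∀ ω ∈ Etil k, H ωk ≤ H ω) :=
  stmt_3_general d T hT H hHrange hHstop δ hδ N tg htg0 htgmono htgN1 E hE
end

section
/- Let T > 0, ε > 0, let ω, ω' : [0,T] → ℝ^d be continuous, let ω̃ : [0,T] → ℝ^d be continuous with ω̃_0 = 0, and let (τ_m)_{m≥0} denote successive ε-oscillation times. For r ∈ [0,T] define the concatenated path (ω ⊗_r ω̃)_s := ω_s for s ∈ [0,r] and (ω ⊗_r ω̃)_s := ω_r + ω̃_{s−r} for s ∈ [r,T]. Then for every m ≥ 0: (i) τ_i(ω ⊗_{τ_m(ω)} ω̃) = τ_i(ω) for all 0 ≤ i ≤ m; (ii) τ_{m+1}(ω ⊗_{τ_m(ω)} ω̃) = min( T, τ_m(ω) + σ_ε(ω̃) ), where σ_ε(ω̃) := inf{ t ∈ (0,T] : |ω̃_t| = ε } (with inf ∅ := +∞); (iii) consequently, if τ_m(ω) ≤ τ_m(ω'), then 0 ≤ τ_{m+1}(ω'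 ⊗_{τ_m(ω')} ω̃) − τ_{m+1}(ω ⊗_{τ_m(ω)} ω̃) ≤ τ_m(ω') − τ_m(ω). -/
/-!
Write the oscillation-hitting set after `τ_m` as `H_m = {s ∈ (τ_m, T] : |ω_s - ω_{τ_m}| = ε}`;
then `τ_{m+1} = inf ({T} ∪ H_m)`. For a continuous path `{T} ∪ H_m` is closed (the left endpoint
is excluded because `ε > 0`), so this infimum is a minimum, and `τ_{i+1}` is determined by the path
on `[0, τ_{i+1}]`. The concatenation agrees with `ω` on `[0, τ_m(ω)]`, which gives (i). Beyond
`τ_m(ω)` its hitting set is the hitting set of `ω̃` from time `0`, shifted by `τ_m(ω)` and cut at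
`T`; hence `τ_{m+1}(ω ⊗ ω̃) = min(T, τ_m(ω) + τ_1(ω̃))`, and (ii), (iii) are arithmetic with `min`.
-/

open Classical

/-- The successive `ε`-oscillation times of a path `ω : [0,T] → ℝ^d`:
`τ₀ := 0` and `τ_{m+1} := inf{ s ∈ (τ_m, T] : |ω_s − ω_{τ_m}| = ε } ∧ T`
(with `τ_{m+1} = T` if the set is empty, i.e. the convention `inf ∅ = +∞`). -/
noncomputable def oscTimes (d : ℕ) (T ε : ℝ) (ω : ℝ → EuclideanSpace ℝ (Fin d)) : ℕ → ℝ
  | 0 => 0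
  | m + 1 =>
    let τ := oscTimes d T ε ω m
    let S : Set ℝ := {s : ℝ | τ < s ∧ s ≤ T ∧ ‖ω s - ω τ‖ = ε}
    if S.Nonempty then min (sInf S) T else T

/-- The concatenation `ω ⊗_r ω̃`, equal to `ω_s` for `s ≤ r` and `ω_r + ω̃_{s−r}` for `s ≥ r`. -/
noncomputable def concatAt (d : ℕ) (r : ℝ) (ω ωtil : ℝ → EuclideanSpace ℝ (Fin d)) :
    ℝ → EuclideanSpace ℝ (Fin d) :=
  fun s => if s ≤ r then ω s else ω r + ωtil (s - r)

open Set

theorem IsLeast.of_mem_iff_of_le {α : Type*} [LinearOrder α] {A B : Set α} {t r : α}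
    (hB : IsLeast B t) (htr : t ≤ r) (hAB : ∀ x ≤ r, x ∈ A ↔ x ∈ B) : IsLeast A t := by
  refine ⟨(hAB t htr).2 hB.1, fun x hx => ?_⟩
  rcases le_or_gt x r with hxr | hrx
  · exact hB.2 ((hAB x hxr).1 hx)
  · exact htr.trans hrx.le

theorem isLeast_insert_image_add_inter_Iic {α : Type*} [AddCommMonoid α] [LinearOrder α]
    [IsOrderedAddMonoid α] {Y : Set α} {y r T : α} (hr : 0 ≤ r)
    (h : IsLeast (insert T Y) y) : IsLeast (insert T ((r + ·) '' Y ∩ Iic T)) (min T (r + y)) := by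
  refine ⟨?_, ?_⟩
  · rcases le_or_gt T (r + y) with hle | hlt
    · rw [min_eq_left hle]
      exact mem_insert T _
    · rw [min_eq_right hlt.le]
      have hyY : y ∈ Y := h.1.resolve_left fun hyT => hlt.not_ge (hyT ▸ le_add_of_nonneg_left hr)
      exact mem_insert_of_mem T ⟨mem_image_of_mem _ hyY, hlt.le⟩
  · rintro x (rfl | ⟨⟨t, ht, rfl⟩, -⟩)
    · exact min_le_left _ _
    · exact (min_le_right _ _).trans (add_le_add_right (h.2 (mem_insert_of_mem T ht)) r)

theorem min_add_min_of_nonneg {α : Type*} [AddCommMonoid α] [LinearOrder α]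
    [IsOrderedAddMonoid α] {T r σ : α} (hr : 0 ≤ r) : min T (r + min T σ) = min T (r + σ) := by
  rw [← min_add_add_left, ← min_assoc, min_eq_left (le_add_of_nonneg_left hr)]

theorem min_add_sub_min_add_le {α : Type*} [AddCommGroup α] [LinearOrder α]
    [IsOrderedAddMonoid α] {T σ a b : α} (hab : a ≤ b) :
    min T (b + σ) - min T (a + σ) ≤ b - a := by
  have h := abs_min_sub_min_le_max T (b + σ) T (a + σ)
  rw [sub_self, abs_zero, add_sub_add_right_eq_sub, abs_of_nonneg (sub_nonneg.2 hab),
    max_eq_right (sub_nonneg.2 hab)] at h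
  exact (le_abs_self _).trans h

theorem ContinuousOn.isClosed_Ioc_inter_preimage {X : Type*} [TopologicalSpace X] {f : ℝ → X}
    {C : Set X} {a b : ℝ} (hf : ContinuousOn f (Icc a b)) (hC : IsClosed C) (ha : f a ∉ C) :
    IsClosed (Ioc a b ∩ f ⁻¹' C) := by
  convert hf.preimage_isClosed_of_isClosed isClosed_Icc hC using 1
  ext s
  refine ⟨fun ⟨⟨has, hsb⟩, hs⟩ => ⟨⟨has.le, hsb⟩, hs⟩, fun ⟨⟨has, hsb⟩, hs⟩ => ⟨⟨?_, hsb⟩, hs⟩⟩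
  exact has.lt_of_ne (by rintro rfl; exact ha hs)

def oscSet {E : Type*} [NormedAddCommGroup E] (T ε : ℝ) (ω : ℝ → E) (τ : ℝ) : Set ℝ :=
  {s | τ < s ∧ s ≤ T ∧ ‖ω s - ω τ‖ = ε}

section oscSet

variable {E : Type*} [NormedAddCommGroup E] {T ε τ : ℝ} {ω : ℝ → E}

theorem bddBelow_oscSet : BddBelow (oscSet T ε ω τ) :=
  ⟨τ, fun _ hs => hs.1.le⟩

theorem isClosed_oscSet (hε : 0 < ε) (hω : ContinuousOn ω (Icc τ T)) :
    IsClosed (oscSet T ε ω τ) := by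
  have hf : ContinuousOn (fun s => ‖ω s - ω τ‖) (Icc τ T) := (hω.sub continuousOn_const).norm
  convert hf.isClosed_Ioc_inter_preimage isClosed_singleton (by simpa using hε.ne) using 1
  ext s
  simp only [oscSet, mem_ofPred_eq, mem_inter_iff, mem_Ioc, mem_preimage, mem_singleton_iff,
    and_assoc]

end oscSet

section oscTimes

variable {d : ℕ} {T ε : ℝ} {ω : ℝ → EuclideanSpace ℝ (Fin d)}

theorem oscTimes_succ_eq_sInf_insert (m : ℕ) :
    oscTimes d T ε ω (m + 1) = sInf (insert T (oscSet T ε ω (oscTimes d T ε ω m))) := by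
  change (if (oscSet T ε ω _).Nonempty then min (sInf (oscSet T ε ω _)) T else T) = _
  split_ifs with h
  · rw [csInf_insert bddBelow_oscSet h, inf_comm]
  · rw [not_nonempty_iff_eq_empty.1 h, insert_empty_eq, csInf_singleton]

theorem oscTimes_le (hT : 0 ≤ T) : ∀ m, oscTimes d T ε ω m ≤ T
  | 0 => hT
  | m + 1 => by
    rw [oscTimes_succ_eq_sInf_insert]
    exact csInf_le (bddBelow_oscSet.insert T) (mem_insert T _)

theorem oscTimes_monotone (hT : 0 ≤ T) : Monotone (oscTimes d T ε ω) := by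
  refine monotone_nat_of_le_succ fun m => ?_
  rw [oscTimes_succ_eq_sInf_insert]
  refine le_csInf (insert_nonempty _ _) ?_
  rintro s (rfl | hs)
  · exact oscTimes_le hT m
  · exact hs.1.le

theorem oscTimes_nonneg (hT : 0 ≤ T) (m : ℕ) : 0 ≤ oscTimes d T ε ω m :=
  oscTimes_monotone hT (Nat.zero_le m)

theorem isLeast_oscTimes_succ (hT : 0 ≤ T) (hε : 0 < ε) (hω : ContinuousOn ω (Icc 0 T))
    (m : ℕ) :
    IsLeast (insert T (oscSet T ε ω (oscTimes d T ε ω m))) (oscTimes d T ε ω (m + 1)) := by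
  have hω' : ContinuousOn ω (Icc (oscTimes d T ε ω m) T) :=
    hω.mono (Icc_subset_Icc_left (oscTimes_nonneg hT m))
  rw [oscTimes_succ_eq_sInf_insert]
  have hclosed : IsClosed (insert T (oscSet T ε ω (oscTimes d T ε ω m))) :=
    isClosed_singleton.union (isClosed_oscSet hε hω')
  exact hclosed.isLeast_csInf (insert_nonempty _ _) (bddBelow_oscSet.insert T)

theorem oscTimes_eq_of_eqOn_Iic (hT : 0 ≤ T) (hε : 0 < ε) (hω : ContinuousOn ω (Icc 0 T))
    {η : ℝ → EuclideanSpace ℝ (Fin d)} {r : ℝ} (hη : ∀ s ≤ r, η s = ω s) {n : ℕ}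
    (hn : oscTimes d T ε ω n ≤ r) : ∀ i ≤ n, oscTimes d T ε η i = oscTimes d T ε ω i
  | 0, _ => rfl
  | i + 1, hi => by
    have hτ : oscTimes d T ε ω (i + 1) ≤ r := (oscTimes_monotone hT hi).trans hn
    have hτi : oscTimes d T ε ω i ≤ r := (oscTimes_monotone hT i.le_succ).trans hτ
    rw [oscTimes_succ_eq_sInf_insert, oscTimes_eq_of_eqOn_Iic hT hε hω hη hn i (by omega)]
    refine ((isLeast_oscTimes_succ hT hε hω i).of_mem_iff_of_le hτ fun s hs => ?_).csInf_eq
    simp only [mem_insert_iff, oscSet, mem_ofPred_eq, hη s hs, hη _ hτi]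

end oscTimes

section concatAt

variable {d : ℕ} {T ε r : ℝ} {ω ωtil : ℝ → EuclideanSpace ℝ (Fin d)}

theorem concatAt_of_le {s : ℝ} (h : s ≤ r) : concatAt d r ω ωtil s = ω s := if_pos h

theorem concatAt_sub_concatAt_of_lt {s : ℝ} (h : r < s) :
    concatAt d r ω ωtil s - concatAt d r ω ωtil r = ωtil (s - r) := by
  rw [concatAt, if_neg h.not_ge, concatAt_of_le le_rfl, add_sub_cancel_left]

theorem oscSet_concatAt (hr : 0 ≤ r) (h0 : ωtil 0 = 0) :
    oscSet T ε (concatAt d r ω ωtil) r = (r + ·) '' oscSet T ε ωtil 0 ∩ Iic T := by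
  ext s
  simp only [oscSet, h0, sub_zero, mem_inter_iff, mem_image, mem_ofPred_eq, mem_Iic]
  constructor
  · rintro ⟨hrs, hsT, hs⟩
    rw [concatAt_sub_concatAt_of_lt hrs] at hs
    exact ⟨⟨s - r, ⟨sub_pos.2 hrs, by linarith, hs⟩, add_sub_cancel r s⟩, hsT⟩
  · rintro ⟨⟨t, ⟨ht0, -, ht⟩, rfl⟩, hsT⟩
    refine ⟨lt_add_of_pos_right r ht0, hsT, ?_⟩
    rwa [concatAt_sub_concatAt_of_lt (lt_add_of_pos_right r ht0), add_sub_cancel_left]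

theorem oscTimes_concatAt_of_le (hT : 0 ≤ T) (hε : 0 < ε) (hω : ContinuousOn ω (Icc 0 T))
    (m : ℕ) : ∀ i ≤ m,
      oscTimes d T ε (concatAt d (oscTimes d T ε ω m) ω ωtil) i = oscTimes d T ε ω i :=
  oscTimes_eq_of_eqOn_Iic hT hε hω (fun _ hs => concatAt_of_le hs) le_rfl

theorem oscTimes_concatAt_succ (hT : 0 ≤ T) (hε : 0 < ε) (hω : ContinuousOn ω (Icc 0 T))
    (hωtil : ContinuousOn ωtil (Icc 0 T)) (hωtil0 : ωtil 0 = 0) (m : ℕ) :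
    oscTimes d T ε (concatAt d (oscTimes d T ε ω m) ω ωtil) (m + 1) =
      min T (oscTimes d T ε ω m + oscTimes d T ε ωtil 1) := by
  have hr := oscTimes_nonneg (ε := ε) (ω := ω) hT m
  rw [oscTimes_succ_eq_sInf_insert, oscTimes_concatAt_of_le hT hε hω m m le_rfl,
    oscSet_concatAt hr hωtil0]
  exact (isLeast_insert_image_add_inter_Iic hr (isLeast_oscTimes_succ hT hε hωtil 0)).csInf_eq

end concatAt

/-- oscillation times of concatenated paths: (i) the first `m` oscillation times of
`ω ⊗_{τ_m(ω)} ω̃` agree with those of `ω`; (ii) the `(m+1)`-st equals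
`min(T, τ_m(ω) + σ_ε(ω̃))` where `σ_ε(ω̃) = inf{t ∈ (0,T] : |ω̃_t| = ε}` (`= T` if this set
is empty, by the convention `inf ∅ = +∞`); (iii) hence if `τ_m(ω) ≤ τ_m(ω')` then
`0 ≤ τ_{m+1}(ω' ⊗ ω̃) − τ_{m+1}(ω ⊗ ω̃) ≤ τ_m(ω') − τ_m(ω)`. -/
theorem stmt_6 (d : ℕ) (T ε : ℝ) (hT : 0 < T) (hε : 0 < ε)
    (ω ω' ωtil : ℝ → EuclideanSpace ℝ (Fin d))
    (hω : ContinuousOn ω (Set.Icc 0 T)) (hω' : ContinuousOn ω' (Set.Icc 0 T))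
    (hωtil : ContinuousOn ωtil (Set.Icc 0 T)) (hωtil0 : ωtil 0 = 0)
    (S : Set ℝ) (hS : S = {t : ℝ | 0 < t ∧ t ≤ T ∧ ‖ωtil t‖ = ε}) :
    (∀ m : ℕ, ∀ i ≤ m,
      oscTimes d T ε (concatAt d (oscTimes d T ε ω m) ω ωtil) i = oscTimes d T ε ω i) ∧
    (∀ m : ℕ,
      (S.Nonempty →
        oscTimes d T ε (concatAt d (oscTimes d T ε ω m) ω ωtil) (m + 1) =
          min T (oscTimes d T ε ω m + sInf S)) ∧
      (¬ S.Nonempty →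
        oscTimes d T ε (concatAt d (oscTimes d T ε ω m) ω ωtil) (m + 1) = T)) ∧
    (∀ m : ℕ, oscTimes d T ε ω m ≤ oscTimes d T ε ω' m →
      0 ≤ oscTimes d T ε (concatAt d (oscTimes d T ε ω' m) ω' ωtil) (m + 1) -
          oscTimes d T ε (concatAt d (oscTimes d T ε ω m) ω ωtil) (m + 1) ∧
      oscTimes d T ε (concatAt d (oscTimes d T ε ω' m) ω' ωtil) (m + 1) -
          oscTimes d T ε (concatAt d (oscTimes d T ε ω m) ω ωtil) (m + 1) ≤
        oscTimes d T ε ω' m - oscTimes d T ε ω m) := by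
  have hσ : oscTimes d T ε ωtil 1 = sInf (insert T S) := by
    rw [oscTimes_succ_eq_sInf_insert, hS]
    simp [oscSet, oscTimes, hωtil0]
  refine ⟨oscTimes_concatAt_of_le hT.le hε hω, fun m => ⟨fun hne => ?_, fun hne => ?_⟩,
    fun m hle => ?_⟩
  · rw [oscTimes_concatAt_succ hT.le hε hω hωtil hωtil0, hσ,
      csInf_insert ⟨0, fun _ ht => (hS ▸ ht).1.le⟩ hne]
    exact min_add_min_of_nonneg (oscTimes_nonneg hT.le m)
  · rw [oscTimes_concatAt_succ hT.le hε hω hωtil hωtil0, hσ, not_nonempty_iff_eq_empty.1 hne,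
      insert_empty_eq, csInf_singleton]
    exact min_eq_left (le_add_of_nonneg_left (oscTimes_nonneg hT.le m))
  · rw [oscTimes_concatAt_succ hT.le hε hω' hωtil hωtil0,
      oscTimes_concatAt_succ hT.le hε hω hωtil hωtil0]
    exact ⟨sub_nonneg.2 (min_le_min_left T (add_le_add_left hle _)), min_add_sub_min_add_le hle⟩
end
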